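/- arXiv:1002.3049 — 6 statements merged into one kernel-verified Lean document; each statement's English description precedes it below -/
import Mathlib

section
/- If y_1, ..., y_n are real numbers in [0,1] with y_1 + ... + y_n = n - 1, then y_1 + ... + y_n ≥ y_1² + ... + y_n² + 2·y_1·y_2···y_n. -/
/-!
Put `xᵢ = 1 - yᵢ`: these lie in `[0, 1]` and sum to `1`, and the claim becomes the truncated
inclusion–exclusion bound `∏ (1 - xᵢ) ≤ 1 - e₁ + e₂` at `e₁ = 1`, which is proved by induction.
-/

open Finset

/-- `∏ (1 - xᵢ) ≤ 1 - e₁ + e₂`, with `2 e₂ = e₁² - ∑ xᵢ²`. -/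
theorem two_mul_prod_one_sub_le {ι R : Type*} [CommRing R] [LinearOrder R] [IsStrictOrderedRing R]
    (s : Finset ι) (x : ι → R) (h0 : ∀ i ∈ s, 0 ≤ x i) (h1 : ∀ i ∈ s, x i ≤ 1) :
    2 * ∏ i ∈ s, (1 - x i) ≤ 2 - 2 * ∑ i ∈ s, x i + (∑ i ∈ s, x i) ^ 2 - ∑ i ∈ s, x i ^ 2 := by
  classical
  induction s using Finset.induction_on with
  | empty => simp
  | @insert a s ha ih =>
    rw [prod_insert ha, sum_insert ha, sum_insert ha]
    have ih := ih (fun i hi ↦ h0 i (mem_insert_of_mem hi)) (fun i hi ↦ h1 i (mem_insert_of_mem hi))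
    have ha0 : 0 ≤ x a := h0 a (mem_insert_self a s)
    have ha1 : 0 ≤ 1 - x a := sub_nonneg.mpr (h1 a (mem_insert_self a s))
    have he2 : 0 ≤ (∑ i ∈ s, x i) ^ 2 - ∑ i ∈ s, x i ^ 2 :=
      sub_nonneg.mpr (sum_sq_le_sq_sum_of_nonneg fun i hi ↦ h0 i (mem_insert_of_mem hi))
    nlinarith [mul_nonneg ha0 he2, mul_le_mul_of_nonneg_left ih ha1]

theorem sum_ge_sum_sq_add_two_prod (n : ℕ) (y : Fin n → ℝ)
    (hy : ∀ i, y i ∈ Set.Icc (0 : ℝ) 1)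
    (hsum : ∑ i, y i = (n : ℝ) - 1) :
    ∑ i, y i ≥ (∑ i, (y i) ^ 2) + 2 * ∏ i, y i := by
  have key := two_mul_prod_one_sub_le univ (fun i ↦ 1 - y i)
    (fun i _ ↦ sub_nonneg.mpr (hy i).2) (fun i _ ↦ sub_le_self 1 (hy i).1)
  have hs1 : ∑ i, (1 - y i) = 1 := by simp [sum_sub_distrib, hsum]
  have hs2 : ∑ i, (1 - y i) ^ 2 = n - 2 * ∑ i, y i + ∑ i, y i ^ 2 := by
    simp only [sub_sq, sum_add_distrib, sum_sub_distrib, ← mul_sum]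
    simp
  simp only [sub_sub_cancel, hs1, hs2] at key
  linarith
end

section
/- If y_1, ..., y_n are real numbers in (0,1) with y_1 + ... + y_n = n - 1, then (y_1·y_2···y_n) / (y_1(1-y_1) + ... + y_n(1-y_n)) ≤ 1/2. -/
/-!
Put `x i = 1 - y i`, so that the `x i` lie in `[0, 1]` and sum to `1`. The second Bonferroni
inequality bounds `∏ y i = ∏ (1 - x i)` by `1 - ∑ x i + ∑_{i<j} x i x j = ∑_{i<j} x i x j`, and
`2 ∑_{i<j} x i x j = (∑ x i)² - ∑ (x i)² = ∑ x i (1 - x i) = ∑ y i (1 - y i)`.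
-/

open Finset

theorem Finset.prod_one_sub_le_one_sub_sum_add {ι : Type*} (s : Finset ι) (x : ι → ℝ)
    (h0 : ∀ i ∈ s, 0 ≤ x i) (h1 : ∀ i ∈ s, x i ≤ 1) :
    ∏ i ∈ s, (1 - x i) ≤
      1 - ∑ i ∈ s, x i + ((∑ i ∈ s, x i) ^ 2 - ∑ i ∈ s, x i ^ 2) / 2 := by
  induction s using Finset.cons_induction with
  | empty => simp
  | cons a t hat ih =>
    simp only [prod_cons, sum_cons]
    have ha0 : 0 ≤ x a := h0 a (mem_cons_self a t)
    have ha1 : x a ≤ 1 := h1 a (mem_cons_self a t)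
    have ht0 : ∀ i ∈ t, 0 ≤ x i := fun i hi => h0 i (mem_cons_of_mem hi)
    have ih := ih ht0 fun i hi => h1 i (mem_cons_of_mem hi)
    have hsq : ∑ i ∈ t, x i ^ 2 ≤ (∑ i ∈ t, x i) ^ 2 := sum_sq_le_sq_sum_of_nonneg ht0
    nlinarith [mul_le_mul_of_nonneg_left ih (sub_nonneg.2 ha1),
      mul_nonneg ha0 (sub_nonneg.2 hsq)]

theorem Finset.prod_le_sum_mul_one_sub_div_two {ι : Type*} (s : Finset ι) (y : ι → ℝ)
    (hy : ∀ i ∈ s, y i ∈ Set.Icc (0 : ℝ) 1) (hsum : ∑ i ∈ s, (1 - y i) = 1) :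
    ∏ i ∈ s, y i ≤ (∑ i ∈ s, y i * (1 - y i)) / 2 := by
  have hbonf := s.prod_one_sub_le_one_sub_sum_add (fun i => 1 - y i)
    (fun i hi => sub_nonneg.2 (hy i hi).2) (fun i hi => by linarith [(hy i hi).1])
  have hden : ∑ i ∈ s, y i * (1 - y i) = ∑ i ∈ s, (1 - y i) - ∑ i ∈ s, (1 - y i) ^ 2 := by
    rw [← sum_sub_distrib]
    exact sum_congr rfl fun i _ => by ring
  simp only [sub_sub_cancel, hsum] at hbonf
  rw [hden, hsum]
  linarith

theorem overlap_sq_le_half_general (n : ℕ) (y : Fin n → ℝ)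
    (hy : ∀ i, y i ∈ Set.Ioo (0 : ℝ) 1)
    (hsum : ∑ i, y i = (n : ℝ) - 1) :
    (∏ i, y i) / (∑ i, y i * (1 - y i)) ≤ 1 / 2 := by
  have hcompl : ∑ i, (1 - y i) = 1 := by
    simp only [sum_sub_distrib, sum_const, card_univ, Fintype.card_fin, nsmul_eq_mul, mul_one,
      hsum]
    ring
  have hden : 0 ≤ ∑ i, y i * (1 - y i) :=
    sum_nonneg fun i _ => mul_nonneg (hy i).1.le (sub_nonneg.2 (hy i).2.le)
  have hprod := univ.prod_le_sum_mul_one_sub_div_two y (fun i _ => Set.Ioo_subset_Icc_self (hy i))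
    hcompl
  exact div_le_of_le_mul₀ hden (by norm_num) (by linarith)

theorem overlap_sq_le_half (n : ℕ) (y : Fin n → ℝ)
    (hy : ∀ i, y i ∈ Set.Ioo (0 : ℝ) 1)
    (hsum : ∑ i, y i = (n : ℝ) - 1)
    (hden : 0 < ∑ i, y i * (1 - y i)) :
    (∏ i, y i) / (∑ i, y i * (1 - y i)) ≤ 1 / 2 :=
  overlap_sq_le_half_general n y hy hsum
end

section
/- Let 0 < c_1 ≤ ... ≤ c_{n-1} be positive reals, let r_2² = c_1² + ... + c_{n-1}², and let r_1 be the unique solution of ∑_{k=1}^{n-1} √(1 - c_k²/r_1²) = n - 2. Then r_2 ≥ r_1. -/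
open Finset Real

theorem r2_ge_r1 (m : ℕ) (c : Fin (m + 1) → ℝ)
    (hpos : ∀ i, 0 < c i) (hmono : Monotone c)
    (r₁ : ℝ) (hr₁dom : c (Fin.last m) ≤ r₁)
    (hr₁ : ∑ i, Real.sqrt (1 - (c i) ^ 2 / r₁ ^ 2) = (m : ℝ))
    (r₂ : ℝ) (hr₂pos : 0 ≤ r₂) (hr₂ : r₂ ^ 2 = ∑ i, (c i) ^ 2) :
    r₂ ≥ r₁ := by
  by_contra h
  push_neg at h
  have hr2sq : 0 < r₂ ^ 2 := by
    rw [hr₂]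
    exact Finset.sum_pos (fun i _ => pow_pos (hpos i) 2) univ_nonempty
  have hr2 : 0 < r₂ := lt_of_le_of_ne hr₂pos (by rintro rfl; simp at hr2sq)
  have hle : ∀ i, c i ^ 2 ≤ r₂ ^ 2 := fun i => hr₂ ▸
    Finset.single_le_sum (f := fun j => c j ^ 2) (fun j _ => sq_nonneg _) (mem_univ i)
  have h0 : ∀ i, 0 ≤ 1 - c i ^ 2 / r₂ ^ 2 := by
    intro i
    rw [sub_nonneg]
    exact div_le_one_of_le₀ (hle i) hr2sq.le
  have key : ∀ i, 1 - c i ^ 2 / r₂ ^ 2 ≤ Real.sqrt (1 - c i ^ 2 / r₂ ^ 2) := by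
    intro i
    have h1 : 1 - c i ^ 2 / r₂ ^ 2 ≤ 1 := by
      have : 0 ≤ c i ^ 2 / r₂ ^ 2 := by positivity
      linarith
    nlinarith [Real.sq_sqrt (h0 i), Real.sqrt_nonneg (1 - c i ^ 2 / r₂ ^ 2), h0 i]
  have hm : (m : ℝ) ≤ ∑ i, Real.sqrt (1 - c i ^ 2 / r₂ ^ 2) := by
    calc (m : ℝ) = ∑ _i : Fin (m + 1), (1 : ℝ) - ∑ i, c i ^ 2 / r₂ ^ 2 := by
          rw [← Finset.sum_div, ← hr₂, div_self hr2sq.ne', Finset.sum_const]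
          simp
      _ = ∑ i, (1 - c i ^ 2 / r₂ ^ 2) := by rw [Finset.sum_sub_distrib]
      _ ≤ _ := Finset.sum_le_sum fun i _ => key i
  have h2 : ∑ i, Real.sqrt (1 - c i ^ 2 / r₂ ^ 2) < ∑ i, Real.sqrt (1 - c i ^ 2 / r₁ ^ 2) := by
    apply Finset.sum_lt_sum_of_nonempty univ_nonempty
    intro i _
    apply Real.sqrt_lt_sqrt (h0 i)
    have hsq : r₂ ^ 2 < r₁ ^ 2 := by nlinarith
    have : c i ^ 2 / r₁ ^ 2 < c i ^ 2 / r₂ ^ 2 :=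
      div_lt_div_of_pos_left (pow_pos (hpos i) 2) hr2sq hsq
    linarith
  rw [hr₁] at h2
  linarith
end

section
/- Let θ_1, ..., θ_n ∈ (0, π/2) satisfy ∑_k cos²θ_k = 1, let r² = 1/(∑_k sin²2θ_k), c_k = r sin 2θ_k, and g = 2r·sinθ_1···sinθ_n. Then g ≥ c_k for every k. -/
open Finset Real

/-- The Weierstrass product inequality. -/
theorem Finset.one_sub_sum_le_prod_one_sub {ι R : Type*} [CommRing R] [LinearOrder R]
    [IsStrictOrderedRing R] (s : Finset ι) {x : ι → R} (h0 : ∀ i ∈ s, 0 ≤ x i)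
    (h1 : ∀ i ∈ s, x i ≤ 1) :
    1 - ∑ i ∈ s, x i ≤ ∏ i ∈ s, (1 - x i) := by
  induction s using Finset.cons_induction with
  | empty => simp
  | cons a s ha ih =>
    rw [sum_cons, prod_cons]
    have hxa : 0 ≤ x a := h0 a (mem_cons_self a s)
    have hxa' : x a ≤ 1 := h1 a (mem_cons_self a s)
    have hs : 0 ≤ ∑ i ∈ s, x i := sum_nonneg fun i hi ↦ h0 i (mem_cons_of_mem hi)
    calc 1 - (x a + ∑ i ∈ s, x i) ≤ (1 - x a) * (1 - ∑ i ∈ s, x i) := by nlinarith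
      _ ≤ (1 - x a) * ∏ i ∈ s, (1 - x i) :=
        mul_le_mul_of_nonneg_left
          (ih (fun i hi ↦ h0 i (mem_cons_of_mem hi)) (fun i hi ↦ h1 i (mem_cons_of_mem hi)))
          (sub_nonneg.2 hxa')

theorem cos_sq_le_prod_erase_sin_sq {ι : Type*} [Fintype ι] [DecidableEq ι] {θ : ι → ℝ}
    (hsum : ∑ j, cos (θ j) ^ 2 = 1) (k : ι) :
    cos (θ k) ^ 2 ≤ ∏ j ∈ univ.erase k, sin (θ j) ^ 2 :=
  calc cos (θ k) ^ 2 = 1 - ∑ j ∈ univ.erase k, cos (θ j) ^ 2 := by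
        rw [← hsum, ← add_sum_erase univ _ (mem_univ k)]; ring
    _ ≤ ∏ j ∈ univ.erase k, (1 - cos (θ j) ^ 2) :=
        one_sub_sum_le_prod_one_sub _ (fun j _ ↦ sq_nonneg _) (fun j _ ↦ cos_sq_le_one _)
    _ = ∏ j ∈ univ.erase k, sin (θ j) ^ 2 := by simp only [sin_sq]

theorem cos_le_prod_erase_sin {ι : Type*} [Fintype ι] [DecidableEq ι] {θ : ι → ℝ}
    (hsum : ∑ j, cos (θ j) ^ 2 = 1) (hsin : ∀ j, 0 ≤ sin (θ j)) (k : ι) :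
    cos (θ k) ≤ ∏ j ∈ univ.erase k, sin (θ j) := by
  have hsq := cos_sq_le_prod_erase_sin_sq hsum k
  rw [prod_pow] at hsq
  exact le_of_sq_le_sq hsq (prod_nonneg fun j _ ↦ hsin j)

theorem overlap_ge_coeff_general (n : ℕ) (θ : Fin n → ℝ)
    (hθ : ∀ k, θ k ∈ Set.Ioo (0 : ℝ) (π / 2))
    (hsum : ∑ k, Real.cos (θ k) ^ 2 = 1)
    (r : ℝ) (hr : 0 < r)
    (c : Fin n → ℝ) (hc : ∀ k, c k = r * Real.sin (2 * θ k))
    (g : ℝ) (hg : g = 2 * r * ∏ k, Real.sin (θ k)) :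
    ∀ k, g ≥ c k := by
  intro k
  have hsin : ∀ j, 0 ≤ sin (θ j) := fun j ↦
    sin_nonneg_of_nonneg_of_le_pi (hθ j).1.le (by linarith [(hθ j).2, pi_pos])
  calc c k = 2 * r * sin (θ k) * cos (θ k) := by rw [hc, sin_two_mul]; ring
    _ ≤ 2 * r * sin (θ k) * ∏ j ∈ univ.erase k, sin (θ j) :=
        mul_le_mul_of_nonneg_left (cos_le_prod_erase_sin hsum hsin k)
          (mul_nonneg (by positivity) (hsin k))
    _ = g := by rw [hg, mul_assoc, mul_prod_erase univ (fun j ↦ sin (θ j)) (mem_univ k)]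

theorem overlap_ge_coeff (n : ℕ) (θ : Fin n → ℝ)
    (hθ : ∀ k, θ k ∈ Set.Ioo (0 : ℝ) (π / 2))
    (hsum : ∑ k, Real.cos (θ k) ^ 2 = 1)
    (r : ℝ) (hr : 0 < r)
    (hr2 : r ^ 2 = 1 / ∑ k, Real.sin (2 * θ k) ^ 2)
    (c : Fin n → ℝ) (hc : ∀ k, c k = r * Real.sin (2 * θ k))
    (g : ℝ) (hg : g = 2 * r * ∏ k, Real.sin (θ k)) :
    ∀ k, g ≥ c k :=
  overlap_ge_coeff_general n θ hθ hsum r hr c hc g hg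
end

section
/- Let θ_1, ..., θ_n ∈ (0, π/2) satisfy ∑_k cos²θ_k = 1, and set g² = (∏_k sin²θ_k) / (∑_k sin²θ_k(1 - sin²θ_k)). Then g² ≤ 1/2. -/
/-!
Put `x k = cos² θ k ∈ [0, 1]`, so `∑ x = 1` and `sin² θ k = 1 - x k`. The denominator is
`∑ (1 - x) x = 1 - ∑ x² = 2 e₂(x)`, so the claim is the second Bonferroni inequality
`∏ (1 - x) ≤ 1 - e₁(x) + e₂(x)`, with `e₂ = ((∑ x)² - ∑ x²) / 2`.
-/

open Finset Real

namespace Finset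

variable {ι R : Type*} [Field R] [LinearOrder R] [IsStrictOrderedRing R]

theorem prod_one_sub_le_bonferroni (s : Finset ι) {x : ι → R}
    (hx : ∀ i ∈ s, x i ∈ Set.Icc (0 : R) 1) :
    ∏ i ∈ s, (1 - x i) ≤ 1 - ∑ i ∈ s, x i + ((∑ i ∈ s, x i) ^ 2 - ∑ i ∈ s, x i ^ 2) / 2 := by
  classical
  induction s using Finset.induction_on with
  | empty => simp
  | @insert a s ha ih =>
    obtain ⟨ha0, ha1⟩ := hx a (mem_insert_self a s)
    have hs : ∀ i ∈ s, x i ∈ Set.Icc (0 : R) 1 := fun i hi => hx i (mem_insert_of_mem hi)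
    have hsq : ∑ i ∈ s, x i ^ 2 ≤ (∑ i ∈ s, x i) ^ 2 :=
      sum_sq_le_sq_sum_of_nonneg fun i hi => (hs i hi).1
    rw [prod_insert ha, sum_insert ha, sum_insert ha]
    calc (1 - x a) * ∏ i ∈ s, (1 - x i)
        ≤ (1 - x a) * (1 - ∑ i ∈ s, x i + ((∑ i ∈ s, x i) ^ 2 - ∑ i ∈ s, x i ^ 2) / 2) :=
          mul_le_mul_of_nonneg_left (ih hs) (sub_nonneg.mpr ha1)
      -- the two sides differ by `x a * ((∑ x)² - ∑ x²) / 2`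
      _ ≤ _ := by nlinarith

theorem two_mul_prod_one_sub_le_sum_one_sub_mul_self (s : Finset ι) {x : ι → R}
    (hx : ∀ i ∈ s, x i ∈ Set.Icc (0 : R) 1) (hsum : ∑ i ∈ s, x i = 1) :
    2 * ∏ i ∈ s, (1 - x i) ≤ ∑ i ∈ s, (1 - x i) * x i := by
  have hbound := prod_one_sub_le_bonferroni s hx
  have hrhs : ∑ i ∈ s, (1 - x i) * x i = 1 - ∑ i ∈ s, x i ^ 2 := by
    simp only [sub_mul, one_mul, ← sq, sum_sub_distrib, hsum]
  rw [hsum] at hbound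
  rw [hrhs]
  linarith

end Finset

theorem g_sq_le_half_general (n : ℕ) (θ : Fin n → ℝ)
    (hsum : ∑ k, Real.cos (θ k) ^ 2 = 1) :
    (∏ k, Real.sin (θ k) ^ 2) /
      (∑ k, Real.sin (θ k) ^ 2 * (1 - Real.sin (θ k) ^ 2)) ≤ 1 / 2 := by
  have hcos : ∀ k ∈ univ, cos (θ k) ^ 2 ∈ Set.Icc (0 : ℝ) 1 :=
    fun k _ => ⟨sq_nonneg _, cos_sq_le_one _⟩
  have key := two_mul_prod_one_sub_le_sum_one_sub_mul_self univ hcos hsum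
  simp_rw [sin_sq, sub_sub_cancel]
  refine div_le_of_le_mul₀ (sum_nonneg fun k hk => ?_) (by norm_num) (by linarith)
  exact mul_nonneg (sub_nonneg.mpr (hcos k hk).2) (hcos k hk).1

theorem g_sq_le_half (n : ℕ) (θ : Fin n → ℝ)
    (hθ : ∀ k, θ k ∈ Set.Ioo (0 : ℝ) (π / 2))
    (hsum : ∑ k, Real.cos (θ k) ^ 2 = 1) :
    (∏ k, Real.sin (θ k) ^ 2) /
      (∑ k, Real.sin (θ k) ^ 2 * (1 - Real.sin (θ k) ^ 2)) ≤ 1 / 2 :=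
  g_sq_le_half_general n θ hsum
end

section
/- Let θ_1, ..., θ_n ∈ [0, π/2] satisfy ∑_k cos²θ_k = 1 and suppose sin 2θ_k / c_k is the same nonzero value 1/r for all k, where c_1, ..., c_n > 0. If cos 2θ_k > 0 for some index k, then c_k = max(c_1, ..., c_n), i.e., c_k ≥ c_l for all l. -/
open Finset Real

theorem cos2theta_pos_implies_max (n : ℕ) (θ : Fin n → ℝ)
    (hθ : ∀ k, θ k ∈ Set.Icc (0 : ℝ) (π / 2))
    (hsum : ∑ k, Real.cos (θ k) ^ 2 = 1)
    (c : Fin n → ℝ) (hc : ∀ k, 0 < c k)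
    (r : ℝ) (hr : 0 < r)
    (hratio : ∀ k, Real.sin (2 * θ k) = c k / r)
    (k : Fin n) (hk : 0 < Real.cos (2 * θ k)) :
    ∀ l, c l ≤ c k := by
  intro l
  by_contra hcl
  push_neg at hcl
  have hlk : l ≠ k := by
    rintro rfl; exact lt_irrefl _ hcl
  set f : Fin n → ℝ := fun j => Real.cos (2 * θ j) with hf
  -- sum of f equals 2 - n
  have hfsum : ∑ j, f j = 2 - n := by
    have h2 : ∑ j, (1/2 + Real.cos (2 * θ j) / 2) = 1 := by
      rw [Finset.sum_congr rfl fun j (_ : j ∈ Finset.univ) => (Real.cos_sq (θ j)).symm]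
      exact hsum
    rw [Finset.sum_add_distrib, Finset.sum_const, ← Finset.sum_div] at h2
    simp only [Finset.card_univ, Fintype.card_fin, nsmul_eq_mul] at h2
    have : ∑ j, f j = ∑ j, Real.cos (2 * θ j) := rfl
    rw [this]; linarith
  -- sines positive, c l > c k gives sin l > sin k
  have hsk : 0 < Real.sin (2 * θ k) := by rw [hratio]; exact div_pos (hc k) hr
  have hsl : Real.sin (2 * θ k) < Real.sin (2 * θ l) := by
    rw [hratio, hratio]; gcongr
  have hpyk := Real.sin_sq_add_cos_sq (2 * θ k)
  have hpyl := Real.sin_sq_add_cos_sq (2 * θ l)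
  have hkl : 0 < f k + f l := by
    have hsq : f l ^ 2 < f k ^ 2 := by
      simp only [hf]
      nlinarith
    nlinarith [hk]
  -- decompose the sum
  have hlmem : l ∈ Finset.univ.erase k := Finset.mem_erase.2 ⟨hlk, Finset.mem_univ l⟩
  have hdec : ∑ j, f j = f k + (f l + ∑ j ∈ (Finset.univ.erase k).erase l, f j) := by
    rw [Finset.add_sum_erase _ f hlmem, Finset.add_sum_erase _ f (Finset.mem_univ k)]
  have hcard : (((Finset.univ.erase k).erase l).card : ℝ) = (n : ℝ) - 2 := by
    rw [Finset.card_erase_of_mem hlmem, Finset.card_erase_of_mem (Finset.mem_univ k)]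
    have hn : 2 ≤ n := by
      have h1 := k.isLt
      have h2 := l.isLt
      have h3 : (l : ℕ) ≠ (k : ℕ) := fun h => hlk (Fin.ext h)
      omega
    simp only [Finset.card_univ, Fintype.card_fin]
    push_cast [Nat.sub_sub]
    rw [Nat.cast_sub hn]; norm_num
  have hrest : -((n : ℝ) - 2) ≤ ∑ j ∈ (Finset.univ.erase k).erase l, f j := by
    rw [← hcard]
    have := Finset.card_nsmul_le_sum ((Finset.univ.erase k).erase l) f (-1)
      (fun j _ => Real.neg_one_le_cos (2 * θ j))
    simpa using this
  rw [hdec] at hfsum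
  linarith
end
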